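/- Let n ≥ 2 and T ∈ T_Q with α = max_i (Σ_{r ≤ i} |t_r| − Σ_{r ≤ i'} |t_r|) < 1, and let Q_T be the unique n-quasi-copula with T(Q_T) = Q_T. If T has a negative entry, then Q_T does not induce a signed measure on [0,1]ⁿ: there is no finite signed Borel measure μ on [0,1]ⁿ with μ(B) = V_{Q_T}(B) for every closed n-box B ⊆ [0,1]ⁿ. -/

import Mathlib

/-!
The fixed point equation `Q = T(Q)` makes `Q` self-similar. If `φ_i` is the increasing affine map
of `[0,1]ⁿ` onto the `i`-th cell of the grid, then `V_Q(φ_i(B)) = t_i · V_Q(B)` for every box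
`B ⊆ [0,1]ⁿ`: expanding `Q = T(Q)` at the vertices of `φ_i(B)`, the term of index `r ≠ i` is
`Q ∘ r_r`, and `r_r` is constant on the cell `i` in a coordinate where `r` and `i` differ, so
its volume vanishes. Iterating along words `w` of length `k`, the images `φ_w(B)` of a box `B`
inside the open cube with `V_Q(B) ≠ 0` are pairwise disjoint, and
`Σ_w |V_Q(φ_w(B))| = (Σ_i |t_i|)^k · |V_Q(B)|`. As `Σ_i t_i = 1` and some `t_i < 0`,
`Σ_i |t_i| > 1`, so these sums are unbounded; a signed measure would bound them by its total
variation.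
-/

open Set MeasureTheory
open scoped ENNReal

noncomputable section

/-- An `n`-quasi-copula on `[0,1]ⁿ`. -/
def IsNQuasiCopula (n : ℕ) (Q : (Fin n → ℝ) → ℝ) : Prop :=
  (∀ u : Fin n → ℝ, (∀ j, u j ∈ Icc (0:ℝ) 1) → Q u ∈ Icc (0:ℝ) 1) ∧
  (∀ u : Fin n → ℝ, (∀ j, u j ∈ Icc (0:ℝ) 1) → (∃ j, u j = 0) → Q u = 0) ∧
  (∀ u : Fin n → ℝ, (∀ j, u j ∈ Icc (0:ℝ) 1) → ∀ k, (∀ j, j ≠ k → u j = 1) → Q u = u k) ∧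
  (∀ u v : Fin n → ℝ, (∀ j, u j ∈ Icc (0:ℝ) 1) → (∀ j, v j ∈ Icc (0:ℝ) 1) →
    (∀ j, u j ≤ v j) → Q u ≤ Q v) ∧
  (∀ u v : Fin n → ℝ, (∀ j, u j ∈ Icc (0:ℝ) 1) → (∀ j, v j ∈ Icc (0:ℝ) 1) →
    |Q u - Q v| ≤ ∑ j, |u j - v j|)

/-- The `Q`-volume of the `n`-box `Π_j [lo j, hi j]`: the standard alternating-sign sum of
`Q` over the vertices of the box. -/
def nVol (n : ℕ) (Q : (Fin n → ℝ) → ℝ) (lo hi : Fin n → ℝ) : ℝ :=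
  ∑ ε : Fin n → Bool,
    (-1 : ℝ) ^ (Finset.univ.filter fun j => ε j = false).card *
      Q (fun j => if ε j then hi j else lo j)

/-- An `n`-copula: an `n`-quasi-copula all of whose box volumes are nonnegative. -/
def IsNCopula (n : ℕ) (Q : (Fin n → ℝ) → ℝ) : Prop :=
  IsNQuasiCopula n Q ∧
  ∀ lo hi : Fin n → ℝ,
    (∀ j, lo j ∈ Icc (0:ℝ) 1 ∧ hi j ∈ Icc (0:ℝ) 1 ∧ lo j ≤ hi j) → 0 ≤ nVol n Q lo hi

/-- The divisions `0 = a_{j,0} < a_{j,1} < ⋯ < a_{j,m_j} = 1` of `[0,1]`. -/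
def IsDivision (n : ℕ) (m : Fin n → ℕ) (a : Fin n → ℕ → ℝ) : Prop :=
  (∀ j, 1 ≤ m j) ∧ (∀ j, a j 0 = 0) ∧ (∀ j, a j (m j) = 1) ∧
  (∀ j, ∀ k, k < m j → a j k < a j (k + 1))

/-- `T ∈ T_Q`: the array `t` consists of the `B`-volumes of the boxes of the division, for
some `n`-quasi-copula `B`.  (Multi-indices are zero-based: the box of index `i` is
`Π_j [a_{j, i j}, a_{j, i j + 1}]`.) -/
def MemTQ (n : ℕ) (m : Fin n → ℕ) (a : Fin n → ℕ → ℝ)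
    (t : ((j : Fin n) → Fin (m j)) → ℝ) : Prop :=
  ∃ B : (Fin n → ℝ) → ℝ, IsNQuasiCopula n B ∧
    ∀ i : (j : Fin n) → Fin (m j),
      t i = nVol n B (fun j => a j (i j : ℕ)) (fun j => a j ((i j : ℕ) + 1))

/-- The `T`-transformation `T(Q)(u) = Σ_i t_i · Q(r_i(u))`. -/
def TApp (n : ℕ) (m : Fin n → ℕ) (a : Fin n → ℕ → ℝ)
    (t : ((j : Fin n) → Fin (m j)) → ℝ) (Q : (Fin n → ℝ) → ℝ) : (Fin n → ℝ) → ℝ :=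
  fun u => ∑ i : (j : Fin n) → Fin (m j),
    t i * Q (fun j =>
      max (min ((u j - a j (i j : ℕ)) / (a j ((i j : ℕ) + 1) - a j (i j : ℕ))) 1) 0)

/-- `Σ_{r ≤ i} |t_r| − Σ_{r ≤ i'} |t_r|`, where `r ≤ i` means `r_h ≤ i_h` for all `h` and
`i'` is obtained from `i` by decreasing every coordinate by one (empty sums are `0`). -/
def alphaTerm (n : ℕ) (m : Fin n → ℕ) (t : ((j : Fin n) → Fin (m j)) → ℝ)
    (i : (j : Fin n) → Fin (m j)) : ℝ :=
  (∑ r ∈ Finset.univ.filter (fun r : (j : Fin n) → Fin (m j) => ∀ h, r h ≤ i h), |t r|) -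
  (∑ r ∈ Finset.univ.filter (fun r : (j : Fin n) → Fin (m j) =>
      ∀ h, (r h : ℕ) < (i h : ℕ)), |t r|)

/-- An open `Q`-null box: an `n`-box `Π_j I_j` with each `I_j` a relatively open interval
of `[0,1]`, such that every closed `n`-box contained in it has zero `Q`-volume. -/
def NOpenQNull (n : ℕ) (Q : (Fin n → ℝ) → ℝ) (B : Set (Fin n → ℝ)) : Prop :=
  (∃ I : Fin n → Set ℝ, B = Set.pi Set.univ I ∧
    ∀ j, (I j).OrdConnected ∧ ∃ U : Set ℝ, IsOpen U ∧ I j = U ∩ Icc 0 1) ∧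
  ∀ lo hi : Fin n → ℝ, (∀ j, lo j ≤ hi j) → Set.Icc lo hi ⊆ B → nVol n Q lo hi = 0

/-- The support of an `n`-quasi-copula: the complement in `[0,1]ⁿ` of the union of all
open `Q`-null boxes. -/
def suppNQ (n : ℕ) (Q : (Fin n → ℝ) → ℝ) : Set (Fin n → ℝ) :=
  {u | ∀ j, u j ∈ Icc (0:ℝ) 1} \ ⋃₀ {B | NOpenQNull n Q B}

/-- A similarity of `ℝⁿ` with ratio `c ∈ (0,1)` (Euclidean distance). -/
def IsSimilarityN (n : ℕ) (c : ℝ) (S : (Fin n → ℝ) → (Fin n → ℝ)) : Prop :=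
  0 < c ∧ c < 1 ∧ ∀ x y : Fin n → ℝ,
    Real.sqrt (∑ j, (S x j - S y j) ^ 2) = c * Real.sqrt (∑ j, (x j - y j) ^ 2)

/-- A self-similar subset of `ℝⁿ`. -/
def IsSelfSimilarN (n : ℕ) (E : Set (Fin n → ℝ)) : Prop :=
  ∃ (k : ℕ) (S : Fin (k + 1) → (Fin n → ℝ) → (Fin n → ℝ)) (c : Fin (k + 1) → ℝ),
    (∀ j, IsSimilarityN n (c j) (S j)) ∧ E = ⋃ j, S j '' E

end

section nVol

variable {n : ℕ}

lemma neg_one_pow_card_update_not (ε : Fin n → Bool) (j : Fin n) :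
    (-1 : ℝ) ^ (Finset.univ.filter fun h => Function.update ε j (!ε j) h = false).card =
      -(-1 : ℝ) ^ (Finset.univ.filter fun h => ε h = false).card := by
  simp only [Finset.card_filter, ← Finset.prod_pow_eq_pow_sum]
  rw [← Finset.mul_prod_erase _ _ (Finset.mem_univ j),
    ← Finset.mul_prod_erase _ (fun h => (-1 : ℝ) ^ if ε h = false then 1 else 0)
      (Finset.mem_univ j), Function.update_self]
  rw [Finset.prod_congr rfl fun h hh => by rw [Function.update_of_ne (Finset.ne_of_mem_erase hh)]]
  cases ε j <;> simp

lemma nVol_eq_zero_of_eq (Q : (Fin n → ℝ) → ℝ) {lo hi : Fin n → ℝ} {j : Fin n}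
    (h : lo j = hi j) : nVol n Q lo hi = 0 := by
  refine Finset.sum_involution (fun ε _ => Function.update ε j (!ε j)) (fun ε _ => ?_)
    (fun ε _ _ hfix => by simpa using congrFun hfix j) (fun _ _ => Finset.mem_univ _)
    (fun ε _ => by simp)
  have hvert : (fun k => if Function.update ε j (!ε j) k then hi k else lo k) =
      fun k => if ε k then hi k else lo k := by
    funext k
    rcases eq_or_ne k j with rfl | hne
    · cases ε k <;> simp [h]
    · simp [Function.update_of_ne hne]
  rw [hvert, neg_one_pow_card_update_not]
  ring

lemma nVol_comp_coordwise (Q : (Fin n → ℝ) → ℝ) (f : Fin n → ℝ → ℝ) (lo hi : Fin n → ℝ) :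
    nVol n (fun u => Q fun j => f j (u j)) lo hi =
      nVol n Q (fun j => f j (lo j)) (fun j => f j (hi j)) := by
  simp only [nVol, apply_ite]

lemma nVol_sum_mul {ι : Type*} (s : Finset ι) (c : ι → ℝ) (F : ι → (Fin n → ℝ) → ℝ)
    (lo hi : Fin n → ℝ) :
    nVol n (fun u => ∑ k ∈ s, c k * F k u) lo hi = ∑ k ∈ s, c k * nVol n (F k) lo hi := by
  simp only [nVol, Finset.mul_sum]
  rw [Finset.sum_comm]
  exact Finset.sum_congr rfl fun _ _ => Finset.sum_congr rfl fun _ _ => by ring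

lemma nVol_congr {Q Q' : (Fin n → ℝ) → ℝ} {lo hi : Fin n → ℝ}
    (h : ∀ u, (∀ j, u j = lo j ∨ u j = hi j) → Q u = Q' u) : nVol n Q lo hi = nVol n Q' lo hi :=
  Finset.sum_congr rfl fun ε _ => by
    rw [h _ fun j => by by_cases hε : ε j <;> simp [hε]]

end nVol

namespace IsNQuasiCopula

variable {n : ℕ} {Q : (Fin n → ℝ) → ℝ}

lemma apply_one (hQ : IsNQuasiCopula n Q) (hn : 1 ≤ n) : Q (fun _ => 1) = 1 :=
  hQ.2.2.1 _ (fun _ => ⟨zero_le_one, le_rfl⟩) ⟨0, hn⟩ fun _ _ => rfl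

lemma nVol_zero_one (hQ : IsNQuasiCopula n Q) (hn : 1 ≤ n) :
    nVol n Q (fun _ => 0) (fun _ => 1) = 1 := by
  rw [nVol, Finset.sum_eq_single (fun _ => true) (fun ε _ hε => ?_) (by simp)]
  · simp [hQ.apply_one hn]
  obtain ⟨j, hj⟩ : ∃ j, ε j = false := by
    by_contra! h
    exact hε (funext fun j => by simpa using h j)
  rw [hQ.2.1 _ (fun j => by cases ε j <;> simp) ⟨j, by simp [hj]⟩, mul_zero]

lemma abs_nVol_sub_nVol_le (hQ : IsNQuasiCopula n Q) {lo hi lo' hi' : Fin n → ℝ}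
    (hlo : ∀ j, lo j ∈ Icc (0:ℝ) 1) (hhi : ∀ j, hi j ∈ Icc (0:ℝ) 1)
    (hlo' : ∀ j, lo' j ∈ Icc (0:ℝ) 1) (hhi' : ∀ j, hi' j ∈ Icc (0:ℝ) 1) :
    |nVol n Q lo hi - nVol n Q lo' hi'| ≤
      2 ^ n * ∑ j, (|lo j - lo' j| + |hi j - hi' j|) := by
  rw [nVol, nVol, ← Finset.sum_sub_distrib]
  refine (Finset.abs_sum_le_sum_abs _ _).trans ?_
  have hterm : ∀ ε : Fin n → Bool,
      |(-1 : ℝ) ^ (Finset.univ.filter fun j => ε j = false).card *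
          Q (fun j => if ε j then hi j else lo j) -
        (-1 : ℝ) ^ (Finset.univ.filter fun j => ε j = false).card *
          Q (fun j => if ε j then hi' j else lo' j)| ≤
        ∑ j, (|lo j - lo' j| + |hi j - hi' j|) := by
    intro ε
    rw [← mul_sub, abs_mul, abs_pow, abs_neg, abs_one, one_pow, one_mul]
    refine (hQ.2.2.2.2 _ _ (fun j => by cases ε j <;> simp [hlo j, hhi j])
      (fun j => by cases ε j <;> simp [hlo' j, hhi' j])).trans
      (Finset.sum_le_sum fun j _ => ?_)
    cases ε j <;> simp [abs_nonneg]
  refine (Finset.sum_le_sum fun ε _ => hterm ε).trans ?_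
  simp

lemma exists_nVol_ne_zero (hQ : IsNQuasiCopula n Q) (hn : 1 ≤ n) :
    ∃ lo hi : Fin n → ℝ, (∀ j, lo j ∈ Ioo (0:ℝ) 1 ∧ hi j ∈ Ioo (0:ℝ) 1 ∧ lo j ≤ hi j) ∧
      nVol n Q lo hi ≠ 0 := by
  -- chosen so that the bound `2 ^ n * (2 * n * e)` of `abs_nVol_sub_nVol_le` is `1 / 2`
  set e : ℝ := 1 / (2 ^ (n + 2) * n)
  have hn' : (1:ℝ) ≤ n := by exact_mod_cast hn
  have he : 0 < e := by positivity
  have he4 : e ≤ 1 / 4 := by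
    rw [div_le_div_iff₀ (by positivity) (by norm_num), pow_succ, pow_succ]
    nlinarith [one_le_pow₀ (M₀ := ℝ) (a := 2) (n := n) (by norm_num)]
  have hbound : 2 ^ n * ∑ _j : Fin n, (|e - 0| + |(1 - e) - 1|) = 1 / 2 := by
    simp only [sub_zero, sub_sub_cancel_left, abs_neg, abs_of_pos he, Finset.sum_const,
      Finset.card_univ, Fintype.card_fin, nsmul_eq_mul, e]
    field_simp
    ring
  refine ⟨fun _ => e, fun _ => 1 - e, fun _ => ⟨⟨he, by linarith⟩, ⟨by linarith, by linarith⟩,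
    by linarith⟩, fun h0 => ?_⟩
  have := hQ.abs_nVol_sub_nVol_le (lo := fun _ => e) (hi := fun _ => 1 - e)
    (fun _ => ⟨he.le, by linarith⟩) (fun _ => ⟨by linarith, by linarith⟩)
    (fun _ => ⟨le_rfl, zero_le_one⟩) (fun _ => ⟨zero_le_one, le_rfl⟩)
  rw [h0, hQ.nVol_zero_one hn, hbound] at this
  norm_num at this

end IsNQuasiCopula

noncomputable def unitClamp (p q y : ℝ) : ℝ := max (min ((y - p) / (q - p)) 1) 0

section unitClamp

variable {p q : ℝ}

lemma unitClamp_add_mul_sub (hpq : p < q) {x : ℝ} (hx : x ∈ Icc (0:ℝ) 1) :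
    unitClamp p q (p + x * (q - p)) = x := by
  rw [unitClamp, add_sub_cancel_left, mul_div_cancel_right₀ _ (sub_pos.2 hpq).ne',
    min_eq_left hx.2, max_eq_left hx.1]

lemma unitClamp_of_le_left (hpq : p < q) {y : ℝ} (hy : y ≤ p) : unitClamp p q y = 0 :=
  max_eq_right <| (min_le_left _ _).trans <|
    div_nonpos_of_nonpos_of_nonneg (sub_nonpos.2 hy) (sub_pos.2 hpq).le

lemma unitClamp_of_right_le (hpq : p < q) {y : ℝ} (hy : q ≤ y) : unitClamp p q y = 1 := by
  rw [unitClamp, min_eq_right ((one_le_div (sub_pos.2 hpq)).2 (by linarith))]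
  exact max_eq_left zero_le_one

end unitClamp

noncomputable def boxIso {ι : Type*} (p q : ι → ℝ) (h : ∀ j, p j < q j) : (ι → ℝ) ≃o (ι → ℝ) where
  toFun x j := p j + x j * (q j - p j)
  invFun y j := (y j - p j) / (q j - p j)
  left_inv x := funext fun j => by
    simp [mul_div_cancel_right₀ _ (sub_pos.2 (h j)).ne']
  right_inv y := funext fun j => by
    simp [div_mul_cancel₀ _ (sub_pos.2 (h j)).ne']
  map_rel_iff' {x y} := by
    simp [Pi.le_def, mul_le_mul_iff_left₀ (sub_pos.2 (h _))]

section boxIso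

variable {ι : Type*} {p q : ι → ℝ} (h : ∀ j, p j < q j)

@[simp]
lemma boxIso_apply (x : ι → ℝ) (j : ι) : boxIso p q h x j = p j + x j * (q j - p j) := rfl

lemma mapsTo_boxIso_Icc :
    MapsTo (boxIso p q h) (univ.pi fun _ => Icc 0 1) (univ.pi fun j => Icc (p j) (q j)) := by
  intro x hx j _
  have hpq := sub_pos.2 (h j)
  have ⟨h0, h1⟩ := hx j (mem_univ j)
  simp only [boxIso_apply, mem_Icc]
  constructor <;> nlinarith

lemma mapsTo_boxIso_Ioo :
    MapsTo (boxIso p q h) (univ.pi fun _ => Ioo 0 1) (univ.pi fun j => Ioo (p j) (q j)) := by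
  intro x hx j _
  have hpq := sub_pos.2 (h j)
  have ⟨h0, h1⟩ := hx j (mem_univ j)
  simp only [boxIso_apply, mem_Ioo]
  constructor <;> nlinarith

end boxIso

namespace IsDivision

variable {n : ℕ} {m : Fin n → ℕ} {a : Fin n → ℕ → ℝ} (hdiv : IsDivision n m a)
include hdiv

lemma strictMonoOn (j : Fin n) : StrictMonoOn (a j) (Iic (m j)) :=
  strictMonoOn_Iic_of_lt_succ fun k hk => by simpa using hdiv.2.2.2 j k hk

lemma mem_Icc {j : Fin n} {k : ℕ} (hk : k ≤ m j) : a j k ∈ Icc (0:ℝ) 1 := by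
  rw [← hdiv.2.1 j, ← hdiv.2.2.1 j]
  exact ⟨(hdiv.strictMonoOn j).monotoneOn (Nat.zero_le _) hk (Nat.zero_le k),
    (hdiv.strictMonoOn j).monotoneOn hk (mem_Iic.2 le_rfl) hk⟩

lemma succ_le_of_lt {j : Fin n} {k l : ℕ} (hkl : k < l) (hl : l ≤ m j) : a j (k + 1) ≤ a j l :=
  (hdiv.strictMonoOn j).monotoneOn (by simp only [mem_Iic]; omega) hl hkl

lemma lt_succ {j : Fin n} (k : Fin (m j)) : a j k < a j (k + 1) := hdiv.2.2.2 j k k.2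

noncomputable def cellIso (i : (j : Fin n) → Fin (m j)) : (Fin n → ℝ) ≃o (Fin n → ℝ) :=
  boxIso (fun j => a j (i j)) (fun j => a j (i j + 1)) fun j => hdiv.lt_succ (i j)

lemma mapsTo_cellIso_Icc_cell (i : (j : Fin n) → Fin (m j)) :
    MapsTo (hdiv.cellIso i) (univ.pi fun _ => Icc 0 1)
      (univ.pi fun j => Icc (a j (i j)) (a j (i j + 1))) :=
  mapsTo_boxIso_Icc _

lemma mapsTo_cellIso_Ioo_cell (i : (j : Fin n) → Fin (m j)) :
    MapsTo (hdiv.cellIso i) (univ.pi fun _ => Ioo 0 1)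
      (univ.pi fun j => Ioo (a j (i j)) (a j (i j + 1))) :=
  mapsTo_boxIso_Ioo _

lemma mapsTo_cellIso_Icc (i : (j : Fin n) → Fin (m j)) :
    MapsTo (hdiv.cellIso i) (univ.pi fun _ => Icc 0 1) (univ.pi fun _ => Icc 0 1) :=
  (hdiv.mapsTo_cellIso_Icc_cell i).mono_right <| pi_mono fun j _ =>
    Icc_subset_Icc (hdiv.mem_Icc (i j).2.le).1 (hdiv.mem_Icc (i j).2).2

lemma mapsTo_cellIso_Ioo (i : (j : Fin n) → Fin (m j)) :
    MapsTo (hdiv.cellIso i) (univ.pi fun _ => Ioo 0 1) (univ.pi fun _ => Ioo 0 1) :=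
  (hdiv.mapsTo_cellIso_Ioo_cell i).mono_right <| pi_mono fun j _ =>
    Ioo_subset_Ioo (hdiv.mem_Icc (i j).2.le).1 (hdiv.mem_Icc (i j).2).2

lemma disjoint_pi_Ioo {i i' : (j : Fin n) → Fin (m j)} (hii' : i ≠ i') :
    Disjoint (univ.pi fun j => Ioo (a j (i j)) (a j (i j + 1)))
      (univ.pi fun j => Ioo (a j (i' j)) (a j (i' j + 1))) := by
  obtain ⟨j, hj⟩ := Function.ne_iff.1 hii'
  refine disjoint_univ_pi.2 ⟨j, ?_⟩
  rcases lt_or_gt_of_ne (Fin.val_ne_of_ne hj) with hlt | hlt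
  · exact disjoint_left.2 fun x hx hx' =>
      lt_asymm (hx.2.trans_le (hdiv.succ_le_of_lt hlt (i' j).2.le)) hx'.1
  · exact disjoint_right.2 fun x hx' hx =>
      lt_asymm (hx'.2.trans_le (hdiv.succ_le_of_lt hlt (i j).2.le)) hx.1

lemma unitClamp_eq_of_mem_Icc {j : Fin n} {k l : Fin (m j)} (hkl : k ≠ l) {y y' : ℝ}
    (hy : y ∈ Icc (a j k) (a j (k + 1))) (hy' : y' ∈ Icc (a j k) (a j (k + 1))) :
    unitClamp (a j l) (a j (l + 1)) y = unitClamp (a j l) (a j (l + 1)) y' := by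
  rcases lt_or_gt_of_ne (Fin.val_ne_of_ne hkl) with hlt | hlt
  · have hle := hdiv.succ_le_of_lt hlt l.2.le
    rw [unitClamp_of_le_left (hdiv.lt_succ l) (hy.2.trans hle),
      unitClamp_of_le_left (hdiv.lt_succ l) (hy'.2.trans hle)]
  · have hle := hdiv.succ_le_of_lt hlt k.2.le
    rw [unitClamp_of_right_le (hdiv.lt_succ l) (hle.trans hy.1),
      unitClamp_of_right_le (hdiv.lt_succ l) (hle.trans hy'.1)]

end IsDivision

lemma TApp_apply {n : ℕ} (m : Fin n → ℕ) (a : Fin n → ℕ → ℝ) (t : ((j : Fin n) → Fin (m j)) → ℝ)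
    (Q : (Fin n → ℝ) → ℝ) (u : Fin n → ℝ) :
    TApp n m a t Q u = ∑ i, t i * Q fun j => unitClamp (a j (i j)) (a j (i j + 1)) (u j) :=
  rfl

lemma nVol_TApp {n : ℕ} (m : Fin n → ℕ) (a : Fin n → ℕ → ℝ) (t : ((j : Fin n) → Fin (m j)) → ℝ)
    (Q : (Fin n → ℝ) → ℝ) (lo hi : Fin n → ℝ) :
    nVol n (TApp n m a t Q) lo hi = ∑ i, t i *
      nVol n Q (fun j => unitClamp (a j (i j)) (a j (i j + 1)) (lo j))
        (fun j => unitClamp (a j (i j)) (a j (i j + 1)) (hi j)) := by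
  refine (nVol_sum_mul _ t (fun i u => Q fun j => unitClamp (a j (i j)) (a j (i j + 1)) (u j))
    lo hi).trans ?_
  simp only [nVol_comp_coordwise]

section FixedPoint

variable {n : ℕ} {m : Fin n → ℕ} {a : Fin n → ℕ → ℝ} {t : ((j : Fin n) → Fin (m j)) → ℝ}
  {Q : (Fin n → ℝ) → ℝ} (hdiv : IsDivision n m a)
  (hfix : ∀ u : Fin n → ℝ, (∀ j, u j ∈ Icc (0:ℝ) 1) → TApp n m a t Q u = Q u)
include hdiv hfix

lemma sum_eq_one_of_fixed (hQ : IsNQuasiCopula n Q) (hn : 1 ≤ n) : ∑ i, t i = 1 := by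
  have hone := hfix (fun _ => 1) fun _ => ⟨zero_le_one, le_rfl⟩
  rw [hQ.apply_one hn, TApp_apply] at hone
  rw [← hone]
  refine Finset.sum_congr rfl fun i _ => ?_
  have hclamp : (fun j => unitClamp (a j (i j)) (a j (i j + 1)) 1) = fun _ => 1 :=
    funext fun j => unitClamp_of_right_le (hdiv.lt_succ (i j)) (hdiv.mem_Icc (i j).2).2
  rw [hclamp, hQ.apply_one hn, mul_one]

lemma nVol_cellIso (i : (j : Fin n) → Fin (m j)) {lo hi : Fin n → ℝ}
    (hlo : lo ∈ univ.pi fun _ => Icc 0 1) (hhi : hi ∈ univ.pi fun _ => Icc 0 1) :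
    nVol n Q (hdiv.cellIso i lo) (hdiv.cellIso i hi) = t i * nVol n Q lo hi := by
  have hvert (u : Fin n → ℝ) (hu : ∀ j, u j = hdiv.cellIso i lo j ∨ u j = hdiv.cellIso i hi j) :
      Q u = TApp n m a t Q u := by
    refine (hfix u fun j => ?_).symm
    rcases hu j with h | h <;> rw [h]
    exacts [hdiv.mapsTo_cellIso_Icc i hlo j (mem_univ j),
      hdiv.mapsTo_cellIso_Icc i hhi j (mem_univ j)]
  have hcell {x : Fin n → ℝ} (hx : x ∈ univ.pi fun _ => Icc 0 1) (j : Fin n) :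
      hdiv.cellIso i x j ∈ Icc (a j (i j)) (a j (i j + 1)) :=
    hdiv.mapsTo_cellIso_Icc_cell i hx j (mem_univ j)
  -- for `r ≠ i`, clamping to the cell `r` collapses the box in a coordinate where `r`, `i` differ
  rw [nVol_congr hvert, nVol_TApp, Finset.sum_eq_single i (fun r _ hri => ?_) (by simp)]
  · congr 2 <;> funext j
    exacts [unitClamp_add_mul_sub (hdiv.lt_succ (i j)) (hlo j (mem_univ j)),
      unitClamp_add_mul_sub (hdiv.lt_succ (i j)) (hhi j (mem_univ j))]
  · obtain ⟨j, hj⟩ := Function.ne_iff.1 hri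
    rw [nVol_eq_zero_of_eq Q (j := j) (hdiv.unitClamp_eq_of_mem_Icc (Ne.symm hj)
      (hcell hlo j) (hcell hhi j)), mul_zero]

end FixedPoint

namespace IsDivision

variable {n : ℕ} {m : Fin n → ℕ} {a : Fin n → ℕ → ℝ}

noncomputable def wordIso (hdiv : IsDivision n m a) :
    {k : ℕ} → (Fin k → (j : Fin n) → Fin (m j)) → (Fin n → ℝ) ≃o (Fin n → ℝ)
  | 0, _ => OrderIso.refl _
  | _ + 1, w => (wordIso hdiv (Fin.tail w)).trans (hdiv.cellIso (w 0))

variable (hdiv : IsDivision n m a)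
include hdiv

lemma wordIso_succ_apply {k : ℕ} (w : Fin (k + 1) → (j : Fin n) → Fin (m j)) (x : Fin n → ℝ) :
    hdiv.wordIso w x = hdiv.cellIso (w 0) (hdiv.wordIso (Fin.tail w) x) := rfl

lemma mapsTo_wordIso {s : Set (Fin n → ℝ)} (hs : ∀ i, MapsTo (hdiv.cellIso i) s s) {k : ℕ}
    (w : Fin k → (j : Fin n) → Fin (m j)) : MapsTo (hdiv.wordIso w) s s := by
  induction k with
  | zero => exact mapsTo_id s
  | succ k ih => exact (hs (w 0)).comp (ih (Fin.tail w))

lemma disjoint_image_wordIso {S : Set (Fin n → ℝ)} (hS : S ⊆ univ.pi fun _ => Ioo 0 1) {k : ℕ}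
    {w w' : Fin k → (j : Fin n) → Fin (m j)} (hww' : w ≠ w') :
    Disjoint (hdiv.wordIso w '' S) (hdiv.wordIso w' '' S) := by
  induction k with
  | zero => exact absurd (Subsingleton.elim w w') hww'
  | succ k ih =>
    have himage (v : Fin (k + 1) → (j : Fin n) → Fin (m j)) :
        hdiv.wordIso v '' S = hdiv.cellIso (v 0) '' (hdiv.wordIso (Fin.tail v) '' S) :=
      image_comp (hdiv.cellIso (v 0)) (hdiv.wordIso (Fin.tail v)) S
    by_cases h0 : w 0 = w' 0
    · rw [himage, himage, h0, disjoint_image_iff (hdiv.cellIso _).injective]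
      refine ih fun htail => hww' ?_
      rw [← Fin.cons_self_tail w, ← Fin.cons_self_tail w', h0, htail]
    · have hcell (v : Fin (k + 1) → (j : Fin n) → Fin (m j)) :
          hdiv.wordIso v '' S ⊆ univ.pi fun j => Ioo (a j (v 0 j)) (a j (v 0 j + 1)) :=
        (((hdiv.mapsTo_cellIso_Ioo_cell (v 0)).comp
          (hdiv.mapsTo_wordIso hdiv.mapsTo_cellIso_Ioo (Fin.tail v))).mono_left hS).image_subset
      exact (hdiv.disjoint_pi_Ioo h0).mono (hcell w) (hcell w')

lemma nVol_wordIso {t : ((j : Fin n) → Fin (m j)) → ℝ} {Q : (Fin n → ℝ) → ℝ}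
    (hfix : ∀ u : Fin n → ℝ, (∀ j, u j ∈ Icc (0:ℝ) 1) → TApp n m a t Q u = Q u)
    {lo hi : Fin n → ℝ} (hlo : lo ∈ univ.pi fun _ => Icc 0 1)
    (hhi : hi ∈ univ.pi fun _ => Icc 0 1) {k : ℕ} (w : Fin k → (j : Fin n) → Fin (m j)) :
    nVol n Q (hdiv.wordIso w lo) (hdiv.wordIso w hi) = (∏ l, t (w l)) * nVol n Q lo hi := by
  induction k with
  | zero => simp [wordIso]
  | succ k ih =>
    rw [wordIso_succ_apply, wordIso_succ_apply, nVol_cellIso hdiv hfix _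
      (hdiv.mapsTo_wordIso hdiv.mapsTo_cellIso_Icc _ hlo)
      (hdiv.mapsTo_wordIso hdiv.mapsTo_cellIso_Icc _ hhi), ih, Fin.prod_univ_succ, mul_assoc]
    rfl

end IsDivision

open Function in
lemma MeasureTheory.SignedMeasure.sum_abs_le_totalVariation {X ι : Type*} [MeasurableSpace X]
    [Fintype ι] (μ : SignedMeasure X) {A : ι → Set X} (hA : ∀ i, MeasurableSet (A i))
    (hd : Pairwise (Disjoint on A)) : ∑ i, |μ (A i)| ≤ μ.totalVariation.real univ :=
  (Finset.sum_le_sum fun i _ => μ.norm_le_totalVariation (A i)).trans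
    (sum_measureReal_le_measureReal_univ (fun i _ => hA i) fun _ _ _ _ hij => hd hij)

lemma IsDivision.sum_abs_pow_mul_abs_nVol_le {n : ℕ} {m : Fin n → ℕ} {a : Fin n → ℕ → ℝ}
    {t : ((j : Fin n) → Fin (m j)) → ℝ} {Q : (Fin n → ℝ) → ℝ} (hdiv : IsDivision n m a)
    (hfix : ∀ u : Fin n → ℝ, (∀ j, u j ∈ Icc (0:ℝ) 1) → TApp n m a t Q u = Q u)
    (μ : SignedMeasure (Fin n → ℝ))
    (hμ : ∀ lo hi : Fin n → ℝ, (∀ j, lo j ∈ Icc (0:ℝ) 1 ∧ hi j ∈ Icc (0:ℝ) 1 ∧ lo j ≤ hi j) →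
      μ (Icc lo hi) = nVol n Q lo hi)
    {lo hi : Fin n → ℝ} (hbox : ∀ j, lo j ∈ Ioo (0:ℝ) 1 ∧ hi j ∈ Ioo (0:ℝ) 1 ∧ lo j ≤ hi j)
    (k : ℕ) : (∑ i, |t i|) ^ k * |nVol n Q lo hi| ≤ μ.totalVariation.real univ := by
  have hlo : lo ∈ univ.pi fun _ => Icc 0 1 := fun j _ => Ioo_subset_Icc_self (hbox j).1
  have hhi : hi ∈ univ.pi fun _ => Icc 0 1 := fun j _ => Ioo_subset_Icc_self (hbox j).2.1
  have hbox_sub : Icc lo hi ⊆ univ.pi fun _ => Ioo 0 1 := fun x hx j _ =>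
    ⟨(hbox j).1.1.trans_le (hx.1 j), (hx.2 j).trans_lt (hbox j).2.1.2⟩
  let A (w : Fin k → (j : Fin n) → Fin (m j)) := hdiv.wordIso w '' Icc lo hi
  have hA (w : Fin k → (j : Fin n) → Fin (m j)) :
      A w = Icc (hdiv.wordIso w lo) (hdiv.wordIso w hi) := OrderIso.image_Icc _ _ _
  have hμA (w : Fin k → (j : Fin n) → Fin (m j)) :
      μ (A w) = (∏ l, t (w l)) * nVol n Q lo hi := by
    rw [hA, hμ _ _ fun j => ⟨hdiv.mapsTo_wordIso hdiv.mapsTo_cellIso_Icc w hlo j (mem_univ j),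
      hdiv.mapsTo_wordIso hdiv.mapsTo_cellIso_Icc w hhi j (mem_univ j),
      (hdiv.wordIso w).monotone (fun j => (hbox j).2.2) j⟩, hdiv.nVol_wordIso hfix hlo hhi]
  calc (∑ i, |t i|) ^ k * |nVol n Q lo hi| = ∑ w, |μ (A w)| := by
        simp only [hμA, abs_mul, Finset.abs_prod, Fintype.sum_pow, Finset.sum_mul]
    _ ≤ μ.totalVariation.real univ :=
        μ.sum_abs_le_totalVariation (fun w => hA w ▸ measurableSet_Icc)
          fun _ _ hww' => hdiv.disjoint_image_wordIso hbox_sub hww'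

lemma one_lt_sum_abs_of_sum_eq_one {ι : Type*} [Fintype ι] {f : ι → ℝ} (hsum : ∑ i, f i = 1)
    {i₀ : ι} (hneg : f i₀ < 0) : 1 < ∑ i, |f i| := by
  have hgap : |f i₀| - f i₀ ≤ ∑ i, (|f i| - f i) :=
    Finset.single_le_sum (f := fun i => |f i| - f i) (fun i _ => sub_nonneg.2 (le_abs_self _))
      (Finset.mem_univ i₀)
  rw [Finset.sum_sub_distrib, hsum, abs_of_neg hneg] at hgap
  linarith

theorem TApp_fixedPoint_no_signedMeasure_general (n : ℕ) (hn : 2 ≤ n) (m : Fin n → ℕ)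
    (a : Fin n → ℕ → ℝ) (hdiv : IsDivision n m a) (t : ((j : Fin n) → Fin (m j)) → ℝ)
    (hneg : ∃ i, t i < 0) (Q : (Fin n → ℝ) → ℝ)
    (hQ : IsNQuasiCopula n Q)
    (hfix : ∀ u : Fin n → ℝ, (∀ j, u j ∈ Icc (0:ℝ) 1) → TApp n m a t Q u = Q u) :
    ¬ ∃ μ : SignedMeasure (Fin n → ℝ),
      ∀ lo hi : Fin n → ℝ,
        (∀ j, lo j ∈ Icc (0:ℝ) 1 ∧ hi j ∈ Icc (0:ℝ) 1 ∧ lo j ≤ hi j) →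
        μ (Set.Icc lo hi) = nVol n Q lo hi := by
  rintro ⟨μ, hμ⟩
  obtain ⟨i₀, hi₀⟩ := hneg
  obtain ⟨lo, hi, hbox, hvol⟩ := hQ.exists_nVol_ne_zero (by omega)
  have hs : 1 < ∑ i, |t i| :=
    one_lt_sum_abs_of_sum_eq_one (sum_eq_one_of_fixed hdiv hfix hQ (by omega)) hi₀
  obtain ⟨k, hk⟩ := pow_unbounded_of_one_lt (μ.totalVariation.real univ / |nVol n Q lo hi|) hs
  rw [div_lt_iff₀ (abs_pos.2 hvol)] at hk
  linarith [hdiv.sum_abs_pow_mul_abs_nVol_le hfix μ hμ hbox k]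

/-- For `T ∈ T_Q` with contraction constant `α < 1` and a negative
entry, the fixed-point quasi-copula `Q_T` does not induce a signed measure on `[0,1]ⁿ`:
there is no finite signed Borel measure `μ` with `μ(B) = V_{Q_T}(B)` for every closed
`n`-box `B ⊆ [0,1]ⁿ`. -/
theorem TApp_fixedPoint_no_signedMeasure (n : ℕ) (hn : 2 ≤ n) (m : Fin n → ℕ)
    (a : Fin n → ℕ → ℝ) (hdiv : IsDivision n m a) (t : ((j : Fin n) → Fin (m j)) → ℝ)
    (hT : MemTQ n m a t) (α : ℝ)
    (hα : IsGreatest {x : ℝ | ∃ i : (j : Fin n) → Fin (m j), x = alphaTerm n m t i} α)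
    (hα1 : α < 1) (hneg : ∃ i, t i < 0) (Q : (Fin n → ℝ) → ℝ)
    (hQ : IsNQuasiCopula n Q)
    (hfix : ∀ u : Fin n → ℝ, (∀ j, u j ∈ Icc (0:ℝ) 1) → TApp n m a t Q u = Q u) :
    ¬ ∃ μ : SignedMeasure (Fin n → ℝ),
      ∀ lo hi : Fin n → ℝ,
        (∀ j, lo j ∈ Icc (0:ℝ) 1 ∧ hi j ∈ Icc (0:ℝ) 1 ∧ lo j ≤ hi j) →
        μ (Set.Icc lo hi) = nVol n Q lo hi :=
  TApp_fixedPoint_no_signedMeasure_general n hn m a hdiv t hneg Q hQ hfix
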